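/- arXiv:2301.04084 — 3 statements merged into one kernel-verified Lean document; each statement's English description precedes it below -/
import Mathlib

section
/- Let s ∈ (0,1), C₀ > 1, and let E ⊂ ℝ be a compact (s,C₀)-AD regular set. Then there is a constant c(s,C₀) > 0 such that for every x ∈ E and 0 < r ≤ diam(E), there exists an open interval I = (a,b) ⊂ [x−r, x] with I ∩ E = ∅, b ∈ E, and length b − a ≥ c(s,C₀)·r. -/
open Set Metric MeasureTheory
open scoped ENNReal NNReal

/-- A set `E` in a metric space is `(s, C₀)`-Ahlfors–David regular:
`C₀⁻¹ r^s ≤ H^s(E ∩ B(x,r)) ≤ C₀ r^s` for all `x ∈ E` and `0 < r ≤ diam E`. -/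
def ADRegular {X : Type*} [MetricSpace X] [MeasurableSpace X] [BorelSpace X]
    (s C₀ : ℝ) (E : Set X) : Prop :=
  ∀ x ∈ E, ∀ r : ℝ, 0 < r → r ≤ Metric.diam E →
    ENNReal.ofReal (C₀⁻¹ * r ^ s) ≤ μH[s] (E ∩ Metric.closedBall x r) ∧
    μH[s] (E ∩ Metric.closedBall x r) ≤ ENNReal.ofReal (C₀ * r ^ s)

set_option maxHeartbeats 1000000

/-- a compact `(s,C₀)`-AD regular subset of ℝ with `s < 1` has, within
every interval `[x-r, x]` with `x ∈ E`, a gap `(a,b)` of definite relative length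
with its right endpoint `b` in `E`. -/
theorem stmt10 (s C₀ : ℝ) (hs : s ∈ Set.Ioo (0 : ℝ) 1) (hC₀ : 1 < C₀) :
    ∃ c : ℝ, 0 < c ∧
      ∀ E : Set ℝ, IsCompact E → ADRegular s C₀ E →
        ∀ x ∈ E, ∀ r : ℝ, 0 < r → r ≤ Metric.diam E →
          ∃ a b : ℝ, a < b ∧ Set.Ioo a b ⊆ Set.Icc (x - r) x ∧
            Set.Ioo a b ∩ E = ∅ ∧ b ∈ E ∧ c * r ≤ b - a := by
  obtain ⟨hs0, hs1⟩ := hs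
  have hC₀0 : (0:ℝ) < C₀ := lt_trans one_pos hC₀
  have h16 : (0:ℝ) < 16 * C₀ ^ 2 := by positivity
  set d : ℝ := (16 * C₀ ^ 2) ^ ((s - 1)⁻¹) with hd
  have hdpos : 0 < d := Real.rpow_pos_of_pos h16 _
  set δ : ℝ := min 4⁻¹ d with hδ
  have hδ0 : 0 < δ := lt_min (by norm_num) hdpos
  have hδ4 : δ ≤ 4⁻¹ := min_le_left _ _
  have hs1' : s - 1 ≠ 0 := by linarith
  have hδpow : 16 * C₀ ^ 2 ≤ δ ^ (s - 1) := by
    have h1 : δ ^ (s - 1) ≥ d ^ (s - 1) :=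
      Real.rpow_le_rpow_of_nonpos hδ0 (min_le_right _ _) (by linarith)
    have h2 : d ^ (s - 1) = 16 * C₀ ^ 2 := by
      rw [hd, ← Real.rpow_mul h16.le, inv_mul_cancel₀ hs1', Real.rpow_one]
    linarith
  clear_value δ
  clear_value d
  refine ⟨δ, hδ0, ?_⟩
  intro E hE hAD x hxE r hr hrd
  by_contra hcon
  push_neg at hcon
  have hδr : 0 < δ * r := mul_pos hδ0 hr
  -- density claim
  have key : ∀ y : ℝ, x - r + δ * r ≤ y → y ≤ x → (E ∩ Icc (y - δ * r) y).Nonempty := by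
    intro y hy1 hy2
    by_contra hne
    rw [Set.not_nonempty_iff_eq_empty] at hne
    set S := E ∩ Icc y x with hS
    have hSne : S.Nonempty := ⟨x, hxE, hy2, le_refl x⟩
    have hScl : IsClosed S := hE.isClosed.inter isClosed_Icc
    have hSbdd : BddBelow S := ⟨y, fun z hz => hz.2.1⟩
    set b := sInf S with hb
    have hbS : b ∈ S := hScl.csInf_mem hSne hSbdd
    have hby : y ≤ b := hbS.2.1
    have hbx : b ≤ x := hbS.2.2
    have h1 : Ioo (b - δ * r) b ⊆ Icc (x - r) x := by
      intro z hz
      exact ⟨by nlinarith [hz.1], by linarith [hz.2]⟩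
    have h2 : Ioo (b - δ * r) b ∩ E = ∅ := by
      ext z
      simp only [Set.mem_inter_iff, Set.mem_Ioo, Set.mem_empty_iff_false, iff_false]
      rintro ⟨⟨hz1, hz2⟩, hzE⟩
      rcases lt_or_ge z y with hzy | hzy
      · have : z ∈ E ∩ Icc (y - δ * r) y := ⟨hzE, by nlinarith, hzy.le⟩
        rw [hne] at this; exact this
      · have : z ∈ S := ⟨hzE, hzy, by linarith⟩
        exact absurd (csInf_le hSbdd this) (not_le.mpr hz2)
    have := hcon (b - δ * r) b (by linarith) h1 h2 hbS.1
    linarith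
  -- the pigeonhole
  set N : ℕ := ⌈(8 * δ)⁻¹⌉₊ with hN
  have hNge : (8 * δ)⁻¹ ≤ (N : ℝ) := Nat.le_ceil _
  have hNlt : (N : ℝ) < (8 * δ)⁻¹ + 1 := Nat.ceil_lt_add_one (by positivity)
  have hyrange : ∀ j : ℕ, j < N → x - r + 2 * (δ * r) ≤ x - 4 * (δ * r) * j ∧
      x - 4 * (δ * r) * j ≤ x := by
    intro j hj
    have hj1 : (j:ℝ) + 1 ≤ N := by exact_mod_cast Nat.succ_le_of_lt hj
    have hj2 : (j:ℝ) < (8 * δ)⁻¹ := by linarith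
    have h8j : 8 * δ * j < 1 := by
      rw [inv_eq_one_div] at hj2
      rw [lt_div_iff₀ (by positivity)] at hj2
      linarith [mul_comm (j:ℝ) (8*δ)]
    constructor
    · nlinarith
    · nlinarith [Nat.cast_nonneg (α := ℝ) j]
  have hech : ∀ j : ℕ, j < N →
      ∃ e, e ∈ E ∩ Icc (x - 4 * (δ * r) * j - δ * r) (x - 4 * (δ * r) * j) := by
    intro j hj
    obtain ⟨h1, h2⟩ := hyrange j hj
    exact key _ (by linarith) h2
  choose! e he using hech
  have heE : ∀ j : ℕ, j < N → e j ∈ E := fun j hj => (he j hj).1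
  have heIcc : ∀ j : ℕ, j < N →
      x - 4 * (δ * r) * j - δ * r ≤ e j ∧ e j ≤ x - 4 * (δ * r) * j :=
    fun j hj => ⟨(he j hj).2.1, (he j hj).2.2⟩
  set f : ℕ → Set ℝ := fun j => E ∩ closedBall (e j) (δ * r) with hf
  have hmeas : ∀ j ∈ Finset.range N, MeasurableSet (f j) := fun j _ =>
    (hE.isClosed.measurableSet).inter measurableSet_closedBall
  have hdisj : (↑(Finset.range N) : Set ℕ).PairwiseDisjoint f := by
    intro j hj k hk hjk
    simp only [Finset.coe_range, Set.mem_Iio] at hj hk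
    have hsep : ∀ j k : ℕ, j < N → k < N → j < k →
        dist (e j) (e k) > 2 * (δ * r) := by
      intro j k hj hk hlt
      obtain ⟨hj1, hj2⟩ := heIcc j hj
      obtain ⟨hk1, hk2⟩ := heIcc k hk
      have hjk1 : (j:ℝ) + 1 ≤ k := by exact_mod_cast Nat.succ_le_of_lt hlt
      have : e k ≤ e j - 3 * (δ * r) := by nlinarith
      rw [Real.dist_eq, abs_of_pos (by linarith)]
      linarith
    have : Disjoint (closedBall (e j) (δ * r)) (closedBall (e k) (δ * r)) := by
      rcases lt_or_gt_of_ne hjk with h | h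
      · exact closedBall_disjoint_closedBall (by linarith [hsep j k hj hk h])
      · exact (closedBall_disjoint_closedBall
          (by linarith [hsep k j hk hj h])).symm
    exact Set.disjoint_of_subset (Set.inter_subset_right) (Set.inter_subset_right) this
  have hsub : (⋃ j ∈ Finset.range N, f j) ⊆ E ∩ closedBall x r := by
    intro z hz
    simp only [hf, Set.mem_iUnion, Finset.mem_range, Set.mem_inter_iff,
      mem_closedBall, Real.dist_eq] at hz
    obtain ⟨j, hj, hzE, hzb⟩ := hz
    refine ⟨hzE, ?_⟩
    obtain ⟨h1, h2⟩ := heIcc j hj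
    obtain ⟨hy1, hy2⟩ := hyrange j hj
    rw [mem_closedBall, Real.dist_eq, abs_le]
    rw [abs_le] at hzb
    constructor <;> linarith [hzb.1, hzb.2]
  have hδrd : δ * r ≤ Metric.diam E := le_trans (by nlinarith) hrd
  have hlow : ∀ j ∈ Finset.range N,
      ENNReal.ofReal (C₀⁻¹ * (δ * r) ^ s) ≤ μH[s] (f j) := by
    intro j hj
    rw [Finset.mem_range] at hj
    exact (hAD (e j) (heE j hj) (δ * r) hδr hδrd).1
  have hup : μH[s] (E ∩ closedBall x r) ≤ ENNReal.ofReal (C₀ * r ^ s) :=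
    (hAD x hxE r hr hrd).2
  have hsum : (N : ℝ≥0∞) * ENNReal.ofReal (C₀⁻¹ * (δ * r) ^ s)
      ≤ ENNReal.ofReal (C₀ * r ^ s) := by
    calc (N : ℝ≥0∞) * ENNReal.ofReal (C₀⁻¹ * (δ * r) ^ s)
        = ∑ j ∈ Finset.range N, ENNReal.ofReal (C₀⁻¹ * (δ * r) ^ s) := by
          rw [Finset.sum_const, Finset.card_range, nsmul_eq_mul]
      _ ≤ ∑ j ∈ Finset.range N, μH[s] (f j) := Finset.sum_le_sum hlow
      _ = μH[s] (⋃ j ∈ Finset.range N, f j) :=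
          (measure_biUnion_finset hdisj hmeas).symm
      _ ≤ μH[s] (E ∩ closedBall x r) := measure_mono hsub
      _ ≤ ENNReal.ofReal (C₀ * r ^ s) := hup
  -- convert to reals
  have hreal : (N : ℝ) * (C₀⁻¹ * (δ * r) ^ s) ≤ C₀ * r ^ s := by
    have := hsum
    rw [← ENNReal.ofReal_natCast, ← ENNReal.ofReal_mul (Nat.cast_nonneg _)] at this
    exact (ENNReal.ofReal_le_ofReal_iff (by positivity)).mp this
  have hrs : (0:ℝ) < r ^ s := Real.rpow_pos_of_pos hr s
  have hmulpow : (δ * r) ^ s = δ ^ s * r ^ s := Real.mul_rpow hδ0.le hr.le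
  have hδs : δ ^ (s - 1) = δ ^ s / δ := by
    rw [Real.rpow_sub hδ0, Real.rpow_one]
  -- N ≥ 1/(8δ), so (1/(8δ)) * C₀⁻¹ * δ^s * r^s ≤ C₀ r^s
  have h1 : (8 * δ)⁻¹ * (C₀⁻¹ * (δ ^ s * r ^ s)) ≤ C₀ * r ^ s := by
    refine le_trans ?_ hreal
    rw [hmulpow]
    apply mul_le_mul_of_nonneg_right hNge (by positivity)
  have ha : (8 * δ)⁻¹ * (C₀⁻¹ * δ ^ s) ≤ C₀ := by
    have h1' : ((8 * δ)⁻¹ * (C₀⁻¹ * δ ^ s)) * r ^ s ≤ C₀ * r ^ s := by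
      linarith [h1]
    exact (mul_le_mul_iff_left₀ hrs).mp h1'
  have h2 : δ ^ s / δ ≤ 8 * C₀ ^ 2 := by
    rw [div_le_iff₀ hδ0]
    have hb := mul_le_mul_of_nonneg_left ha (by positivity : (0:ℝ) ≤ 8 * δ * C₀)
    have hc : 8 * δ * C₀ * ((8 * δ)⁻¹ * (C₀⁻¹ * δ ^ s)) = δ ^ s := by
      field_simp
    rw [hc] at hb
    nlinarith [hb]
  rw [hδs] at hδpow
  nlinarith [sq_nonneg C₀]
end

section
/- Let s ∈ (0,1), C₀ > 1, and let E ⊂ ℝ be a compact (s,C₀)-AD regular set. Then there exists c = c(s,C₀) > 0 such that for every y ∈ E and every ℓ ∈ (0, diam(E)], there exist radii r₁, r₂ with ℓ/2 ≤ r₁ < r₂ ≤ ℓ, r₂ − r₁ ≥ c·ℓ, and (B(y,r₂) \ closure(B(y,r₁))) ∩ E = ∅. -/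
open Set Metric MeasureTheory

/-- around every point of a compact `(s,C₀)`-AD regular subset of ℝ with
`s < 1` and at every scale `ℓ ≤ diam E`, there is an annulus `B(y,r₂) \ B̄(y,r₁)`
with `ℓ/2 ≤ r₁ < r₂ ≤ ℓ` of definite relative width which misses `E`. -/
theorem stmt11 (s C₀ : ℝ) (hs : s ∈ Set.Ioo (0 : ℝ) 1) (hC₀ : 1 < C₀) :
    ∃ c : ℝ, 0 < c ∧
      ∀ E : Set ℝ, IsCompact E → ADRegular s C₀ E →
        ∀ y ∈ E, ∀ ℓ : ℝ, 0 < ℓ → ℓ ≤ Metric.diam E →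
          ∃ r₁ r₂ : ℝ, ℓ / 2 ≤ r₁ ∧ r₁ < r₂ ∧ r₂ ≤ ℓ ∧ c * ℓ ≤ r₂ - r₁ ∧
            (Metric.ball y r₂ \ closure (Metric.ball y r₁)) ∩ E = ∅ := by
  obtain ⟨hs0, hs1⟩ := hs
  have h1s : (0:ℝ) < 1 - s := by linarith
  obtain ⟨M, hM1, hMbig⟩ : ∃ M : ℕ, 1 ≤ M ∧ 24 * C₀ ^ 2 < (M : ℝ) ^ (1 - s) := by
    have h2 := (tendsto_rpow_atTop h1s).comp (tendsto_natCast_atTop_atTop (R := ℝ))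
    obtain ⟨M, h3, h4⟩ := ((h2.eventually_gt_atTop (24 * C₀ ^ 2)).and
      (Filter.eventually_ge_atTop 1)).exists
    exact ⟨M, h4, h3⟩
  have hMpos : (0:ℝ) < M := by exact_mod_cast hM1
  refine ⟨1 / (8 * M), by positivity, ?_⟩
  intro E hE hreg y hy ℓ hℓ hℓd
  by_contra hcon
  push_neg at hcon
  set w : ℝ := ℓ / (8 * M) with hw
  have hwpos : 0 < w := by positivity
  have hM1' : (1:ℝ) ≤ M := by exact_mod_cast hM1
  have hwℓ : w ≤ ℓ / 8 := by
    rw [hw, div_le_div_iff₀ (by positivity) (by norm_num)]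
    nlinarith [mul_nonneg hℓ.le (sub_nonneg.mpr hM1')]
  -- for each i < M, the annulus (a i, a i + w) contains a point of E
  have key : ∀ i ∈ Finset.range M, ∃ x, x ∈ E ∧
      ℓ / 2 + 2 * i * w < dist x y ∧ dist x y < ℓ / 2 + 2 * i * w + w := by
    intro i hi
    have hiM : (i : ℝ) ≤ (M : ℝ) - 1 := by
      have : i + 1 ≤ M := Finset.mem_range.mp hi
      have : (i:ℝ) + 1 ≤ M := by exact_mod_cast this
      linarith
    have h2iw : 2 * (i:ℝ) * w + w ≤ 2 * M * w := by nlinarith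
    have hr2 : ℓ / 2 + 2 * i * w + w ≤ ℓ := by
      have : 2 * (M:ℝ) * w = ℓ / 4 := by
        rw [hw, mul_div_assoc', div_eq_div_iff (by positivity) (by norm_num)]; ring
      linarith
    have hceq : 1 / (8 * (M:ℝ)) * ℓ = w := by rw [hw]; ring
    have h := hcon (ℓ / 2 + 2 * i * w) (ℓ / 2 + 2 * i * w + w)
      (by nlinarith) (by linarith) hr2 (by linarith [hceq])
    obtain ⟨x, ⟨hxb, hxnc⟩, hxE'⟩ := h
    refine ⟨x, hxE', ?_, ?_⟩
    · rw [closure_ball y (by positivity : ℓ / 2 + 2 * (i:ℝ) * w ≠ 0)] at hxnc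
      simpa [mem_closedBall, not_le] using hxnc
    · simpa [mem_ball] using hxb
  choose! x hxE hx1 hx2 using key
  -- the balls B(x i, w/3) are pairwise disjoint
  have hsep : ∀ i ∈ Finset.range M, ∀ j ∈ Finset.range M, i ≠ j →
      Disjoint (closedBall (x i) (w/3)) (closedBall (x j) (w/3)) := by
    have base : ∀ i ∈ Finset.range M, ∀ j ∈ Finset.range M, i < j →
        w / 3 + w / 3 < dist (x i) (x j) := by
      intro i hi j hj hij
      have h1 := hx2 i hi
      have h2 := hx1 j hj
      have hij' : (i:ℝ) + 1 ≤ j := by exact_mod_cast hij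
      have htri : dist (x j) y ≤ dist (x j) (x i) + dist (x i) y := dist_triangle _ _ _
      have : w < dist (x j) (x i) := by nlinarith
      rw [dist_comm] at this; linarith
    intro i hi j hj hij
    rcases hij.lt_or_gt with h | h
    · exact closedBall_disjoint_closedBall (base i hi j hj h)
    · exact (closedBall_disjoint_closedBall (base j hj i hi h)).symm
  set f : ℕ → Set ℝ := fun i => E ∩ closedBall (x i) (w/3) with hf
  have hdisj : (↑(Finset.range M) : Set ℕ).PairwiseDisjoint f := by
    intro i hi j hj hij
    exact ((hsep i (by simpa using hi) j (by simpa using hj) hij).mono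
      inter_subset_right inter_subset_right)
  have hmeas : ∀ i ∈ Finset.range M, MeasurableSet (f i) :=
    fun i _ => (hE.isClosed.measurableSet).inter measurableSet_closedBall
  have hsum : μH[s] (⋃ i ∈ Finset.range M, f i) = ∑ i ∈ Finset.range M, μH[s] (f i) :=
    measure_biUnion_finset hdisj hmeas
  -- upper bound: union is contained in E ∩ closedBall y ℓ
  have hsub : (⋃ i ∈ Finset.range M, f i) ⊆ E ∩ closedBall y ℓ := by
    intro z hz
    simp only [mem_iUnion] at hz
    obtain ⟨i, hi, hzE, hzB⟩ := hz
    refine ⟨hzE, ?_⟩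
    have hiM : (i : ℝ) ≤ (M : ℝ) - 1 := by
      have : i + 1 ≤ M := Finset.mem_range.mp hi
      have : (i:ℝ) + 1 ≤ M := by exact_mod_cast this
      linarith
    have htri : dist z y ≤ dist z (x i) + dist (x i) y := dist_triangle _ _ _
    have h2 := hx2 i hi
    have hzB' : dist z (x i) ≤ w / 3 := mem_closedBall.mp hzB
    have h2Mw : 2 * (M:ℝ) * w = ℓ / 4 := by rw [hw, mul_div_assoc', div_eq_div_iff (by positivity) (by norm_num)]; ring
    simp only [mem_closedBall]
    nlinarith
  have hupper : μH[s] (⋃ i ∈ Finset.range M, f i) ≤ ENNReal.ofReal (C₀ * ℓ ^ s) :=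
    le_trans (measure_mono hsub) (hreg y hy ℓ hℓ hℓd).2
  -- lower bound on each piece
  have hw3 : 0 < w / 3 := by positivity
  have hw3d : w / 3 ≤ Metric.diam E := by linarith [hwℓ, hℓd]
  have hlow : ∀ i ∈ Finset.range M,
      ENNReal.ofReal (C₀⁻¹ * (w/3) ^ s) ≤ μH[s] (f i) :=
    fun i hi => (hreg (x i) (hxE i hi) (w/3) hw3 hw3d).1
  have hcard : (Finset.range M).card • ENNReal.ofReal (C₀⁻¹ * (w/3) ^ s)
      ≤ ∑ i ∈ Finset.range M, μH[s] (f i) :=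
    Finset.card_nsmul_le_sum _ _ _ hlow
  rw [Finset.card_range] at hcard
  have hfinal : ENNReal.ofReal ((M:ℝ) * (C₀⁻¹ * (w/3) ^ s)) ≤ ENNReal.ofReal (C₀ * ℓ ^ s) := by
    calc ENNReal.ofReal ((M:ℝ) * (C₀⁻¹ * (w/3) ^ s))
        = M • ENNReal.ofReal (C₀⁻¹ * (w/3) ^ s) := by
          rw [nsmul_eq_mul, ← ENNReal.ofReal_natCast M, ← ENNReal.ofReal_mul (by positivity)]
      _ ≤ ∑ i ∈ Finset.range M, μH[s] (f i) := hcard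
      _ = μH[s] (⋃ i ∈ Finset.range M, f i) := hsum.symm
      _ ≤ ENNReal.ofReal (C₀ * ℓ ^ s) := hupper
  have hC₀pos : (0:ℝ) < C₀ := by linarith
  have hℓs : (0:ℝ) < ℓ ^ s := Real.rpow_pos_of_pos hℓ s
  have hreal : (M:ℝ) * (C₀⁻¹ * (w/3) ^ s) ≤ C₀ * ℓ ^ s :=
    (ENNReal.ofReal_le_ofReal_iff (mul_nonneg hC₀pos.le hℓs.le)).mp hfinal
  have hw3eq : w / 3 = ℓ / (24 * M) := by rw [hw, div_div]; congr 1; ring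
  have hws : (w/3) ^ s = ℓ ^ s / ((24:ℝ) ^ s * (M:ℝ) ^ s) := by
    rw [hw3eq, Real.div_rpow hℓ.le (by positivity), Real.mul_rpow (by norm_num) hMpos.le]
  have hMs : (M:ℝ) ^ (1 - s) = (M:ℝ) / (M:ℝ) ^ s := by
    rw [Real.rpow_sub hMpos, Real.rpow_one]
  have hMsp : (0:ℝ) < (M:ℝ) ^ s := Real.rpow_pos_of_pos hMpos s
  have h24s : (0:ℝ) < (24:ℝ) ^ s := by positivity
  have h24le : (24:ℝ) ^ s ≤ 24 := by
    calc (24:ℝ) ^ s ≤ (24:ℝ) ^ (1:ℝ) :=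
      Real.rpow_le_rpow_of_exponent_le (by norm_num) hs1.le
    _ = 24 := Real.rpow_one 24
  rw [hws] at hreal
  have hkey : (M:ℝ) ≤ C₀ ^ 2 * ((24:ℝ) ^ s * (M:ℝ) ^ s) := by
    rw [inv_mul_eq_div, div_div] at hreal
    rw [show (M:ℝ) * (ℓ ^ s / ((24:ℝ) ^ s * (M:ℝ) ^ s * C₀)) =
      ((M:ℝ) * ℓ ^ s) / ((24:ℝ) ^ s * (M:ℝ) ^ s * C₀) from by ring] at hreal
    have h1 := (div_le_iff₀ (by positivity)).mp hreal
    have h2 : (M:ℝ) * ℓ ^ s ≤ (C₀ ^ 2 * ((24:ℝ) ^ s * (M:ℝ) ^ s)) * ℓ ^ s :=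
      h1.trans (le_of_eq (by ring))
    exact le_of_mul_le_mul_right h2 hℓs
  have : (M:ℝ) ^ (1 - s) ≤ 24 * C₀ ^ 2 := by
    rw [hMs, div_le_iff₀ hMsp]
    nlinarith [mul_nonneg (mul_nonneg (sub_nonneg.mpr h24le) (sq_nonneg C₀)) hMsp.le]
  linarith
end

section
/- Let n ≥ 1 and let u : ℝ^{n+1} \ {0} → ℝ. Define the Kelvin transform u*(y) = |y|^{−(n−1)} u(y/|y|²). If u is harmonic on an open set Ω ⊂ ℝ^{n+1} \ {0}, then u* is harmonic on Ω* = {x/|x|² : x ∈ Ω}. Moreover (u*)* = u. -/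
open Set Metric
open scoped RealInnerProductSpace

noncomputable section

/-- A function is harmonic on a set `s ⊆ ℝ^m`: it is `C²` there and its Laplacian
(the sum of its pure second derivatives in the coordinate directions) vanishes. -/
def IsHarmonicOn {m : ℕ} (f : EuclideanSpace ℝ (Fin m) → ℝ)
    (s : Set (EuclideanSpace ℝ (Fin m))) : Prop :=
  ContDiffOn ℝ 2 f s ∧
  ∀ x ∈ s,
    ∑ i : Fin m,
      fderiv ℝ (fun y => fderiv ℝ f y (EuclideanSpace.single i 1)) x
        (EuclideanSpace.single i 1) = 0

/-- The Kelvin transform `u*(y) = |y|^{-(n-1)} · u(y/|y|²)` with respect to the unit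
sphere in `ℝ^{n+1}`. -/
def kelvin (n : ℕ) (u : EuclideanSpace ℝ (Fin (n + 1)) → ℝ)
    (y : EuclideanSpace ℝ (Fin (n + 1))) : ℝ :=
  (‖y‖ ^ (n - 1))⁻¹ * u ((‖y‖ ^ 2)⁻¹ • y)

namespace KelvinAux

variable {m : ℕ}
local notation "E" => EuclideanSpace ℝ (Fin m)

def r (x : E) : ℝ := ‖x‖ ^ 2
def iv (x : E) : E := (‖x‖ ^ 2)⁻¹ • x

lemma r_pos {x : E} (hx : x ≠ 0) : 0 < r x := pow_pos (norm_pos_iff.mpr hx) 2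

lemma norm_iv (x : E) : ‖iv (x : E)‖ = ‖x‖⁻¹ := by
  rcases eq_or_ne x 0 with rfl | hx
  · simp [iv]
  · have h : (0:ℝ) < ‖x‖ := norm_pos_iff.mpr hx
    rw [iv, norm_smul]
    simp [abs_of_pos (inv_pos.mpr (r_pos hx)), pow_two]
    field_simp

lemma iv_ne_zero {x : E} (hx : x ≠ 0) : iv x ≠ 0 := by
  intro h
  have := norm_iv x
  rw [h] at this
  simp at this
  exact hx (by simpa [norm_eq_zero] using this.symm)

lemma iv_iv {x : E} (hx : x ≠ 0) : iv (iv x) = x := by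
  have h : (0:ℝ) < ‖x‖ := norm_pos_iff.mpr hx
  rw [iv, norm_iv, iv, smul_smul]
  rw [show ((‖x‖⁻¹ ^ 2)⁻¹ * (‖x‖ ^ 2)⁻¹ : ℝ) = 1 by field_simp]
  simp

lemma hasFDerivAt_r (x : E) : HasFDerivAt (r (m := m)) (2 • innerSL ℝ x) x := by
  unfold r; exact (hasFDerivAt_id (𝕜 := ℝ) x).norm_sq

def Dphi (x : E) : E →L[ℝ] E :=
  (r x)⁻¹ • ContinuousLinearMap.id ℝ E - ((2 * ((r x)⁻¹)^2) • innerSL ℝ x).smulRight x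

lemma hasFDerivAt_iv {x : E} (hx : x ≠ 0) : HasFDerivAt (iv (m := m)) (Dphi x) x := by
  have h1 : HasFDerivAt (fun z : E => (r z)⁻¹)
      ((-((r x) ^ 2)⁻¹) • (2 • innerSL ℝ x)) x :=
    (hasDerivAt_inv (r_pos hx).ne').comp_hasFDerivAt x (hasFDerivAt_r x)
  have h2 := h1.smul (hasFDerivAt_id x)
  have : iv (m := m) = fun z : E => (r z)⁻¹ • z := by funext z; rfl
  rw [this]
  refine h2.congr_fderiv (Eq.symm ?_)
  ext w
  simp [Dphi, smul_smul]
  ring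

lemma rpow_shift {R : ℝ} (hR : 0 < R) (c : ℝ) : R ^ (c - 1) = R ^ c * R⁻¹ := by
  rw [Real.rpow_sub hR, Real.rpow_one]; ring

/-- Derivative of `z ↦ (r z)^pc * u (iv z)`. -/
lemma hasFDerivAt_G {pc : ℝ} {u : E → ℝ} {x : E} (hx : x ≠ 0) {g : E →L[ℝ] ℝ}
    (hg : HasFDerivAt u g (iv x)) :
    HasFDerivAt (fun z : E => r z ^ pc * u (iv z))
      ((2 * pc * r x ^ (pc - 1) * u (iv x) - 2 * r x ^ (pc - 2) * g x) • innerSL ℝ x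
        + (r x ^ (pc - 1)) • g) x := by
  have hR := r_pos hx
  have hrc : HasFDerivAt (fun z : E => r z ^ pc)
      ((pc * r x ^ (pc - 1)) • (2 • innerSL ℝ x)) x :=
    (hasFDerivAt_r x).rpow_const (Or.inl hR.ne')
  have hcomp : HasFDerivAt (fun z : E => u (iv z)) (g.comp (Dphi x)) x :=
    hg.comp x (hasFDerivAt_iv hx)
  have h := hrc.mul hcomp
  refine h.congr_fderiv (Eq.symm ?_)
  ext w
  have e1 : r x ^ (pc - 1) = r x ^ pc * (r x)⁻¹ := rpow_shift hR pc
  have e2 : r x ^ (pc - 2) = r x ^ pc * (r x)⁻¹ * (r x)⁻¹ := by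
    rw [show pc - 2 = pc - 1 - 1 by ring, rpow_shift hR, rpow_shift hR]
  simp [Dphi, smul_smul, e1, e2, mul_comm, real_inner_comm]
  ring

lemma sum_coord_apply (x : E) (L : E →L[ℝ] ℝ) :
    ∑ i : Fin m, x i * L (EuclideanSpace.single i 1) = L x := by
  have hx : ∑ i : Fin m, x i • (EuclideanSpace.single i 1 : E) = x := by
    simpa using (EuclideanSpace.basisFun (Fin m) ℝ).sum_repr x
  calc ∑ i : Fin m, x i * L (EuclideanSpace.single i 1)
      = ∑ i : Fin m, L (x i • EuclideanSpace.single i 1) := by simp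
    _ = L x := by rw [← map_sum, hx]

lemma sum_coord_sq (x : E) : ∑ i : Fin m, x i * x i = r x := by
  have h := sum_coord_apply x (innerSL ℝ x)
  rw [r, ← real_inner_self_eq_norm_sq]
  rw [show (inner ℝ x x : ℝ) = (innerSL ℝ) x x from rfl, ← h]
  simp [EuclideanSpace.inner_single_right]

lemma hasFDerivAt_proj (x : E) (i : Fin m) :
    HasFDerivAt (fun z : E => z i) (EuclideanSpace.proj (𝕜 := ℝ) i) x :=
  (EuclideanSpace.proj (𝕜 := ℝ) i).hasFDerivAt

/-- The pointwise first-derivative formula, applied to a coordinate direction. -/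
lemma fderiv_G_apply {pc : ℝ} {u : E → ℝ} {z : E} (hz : z ≠ 0)
    (hdu : DifferentiableAt ℝ u (iv z)) (i : Fin m) :
    fderiv ℝ (fun w : E => r w ^ pc * u (iv w)) z (EuclideanSpace.single i 1) =
      (2 * pc * r z ^ (pc - 1) * u (iv z)
          - 2 * r z ^ (pc - 2) * fderiv ℝ u (iv z) z) * z i
        + r z ^ (pc - 1) * fderiv ℝ u (iv z) (EuclideanSpace.single i 1) := by
  rw [(hasFDerivAt_G hz hdu.hasFDerivAt).fderiv]
  simp [EuclideanSpace.inner_single_right, starRingEnd_apply, star_trivial]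

set_option maxHeartbeats 1000000 in
lemma sum_snd_deriv {pc : ℝ} {u : E → ℝ} {x : E} (hx : x ≠ 0)
    (hdu : DifferentiableAt ℝ u (iv x)) (hdH : DifferentiableAt ℝ (fderiv ℝ u) (iv x))
    (hm : (m : ℝ) = 2 - 2 * pc)
    (hlap : ∑ i : Fin m, fderiv ℝ (fderiv ℝ u) (iv x) (EuclideanSpace.single i 1)
        (EuclideanSpace.single i 1) = 0) :
    ∑ i : Fin m, fderiv ℝ
      (fun z : E => (2 * pc * r z ^ (pc - 1) * u (iv z)
          - 2 * r z ^ (pc - 2) * fderiv ℝ u (iv z) z) * z i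
        + r z ^ (pc - 1) * fderiv ℝ u (iv z) (EuclideanSpace.single i 1)) x
      (EuclideanSpace.single i 1) = 0 := by
  have hR := r_pos hx
  set g := fderiv ℝ u (iv x) with hgdef
  set H := fderiv ℝ (fderiv ℝ u) (iv x) with hHdef
  have hA : HasFDerivAt (fun z : E => r z ^ (pc - 1))
      (((pc - 1) * r x ^ (pc - 1 - 1)) • (2 • innerSL ℝ x)) x :=
    (hasFDerivAt_r x).rpow_const (Or.inl hR.ne')
  have hA2 : HasFDerivAt (fun z : E => r z ^ (pc - 2))
      (((pc - 2) * r x ^ (pc - 2 - 1)) • (2 • innerSL ℝ x)) x :=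
    (hasFDerivAt_r x).rpow_const (Or.inl hR.ne')
  have hB : HasFDerivAt (fun z : E => u (iv z)) (g.comp (Dphi x)) x :=
    hdu.hasFDerivAt.comp x (hasFDerivAt_iv hx)
  have hC : HasFDerivAt (fun z : E => fderiv ℝ u (iv z)) (H.comp (Dphi x)) x :=
    hdH.hasFDerivAt.comp x (hasFDerivAt_iv hx)
  have hC2 := hC.clm_apply (hasFDerivAt_id x)
  have key : ∀ i ∈ (Finset.univ : Finset (Fin m)),
      fderiv ℝ (fun z : E => (2 * pc * r z ^ (pc - 1) * u (iv z)
          - 2 * r z ^ (pc - 2) * fderiv ℝ u (iv z) z) * z i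
        + r z ^ (pc - 1) * fderiv ℝ u (iv z) (EuclideanSpace.single i 1)) x
        (EuclideanSpace.single i 1)
      = (4 * pc * (pc - 1) * r x ^ (pc - 1 - 1) * u (iv x)
            - 4 * pc * r x ^ (pc - 1) * ((r x)⁻¹) ^ 2 * g x
            - 4 * (pc - 2) * r x ^ (pc - 2 - 1) * g x
            + 4 * r x ^ (pc - 2) * ((r x)⁻¹) ^ 2 * H x x) * (x i * x i)
        + (2 * pc * r x ^ (pc - 1) * (r x)⁻¹ - 2 * r x ^ (pc - 2)
            + 2 * (pc - 1) * r x ^ (pc - 1 - 1)) * (x i * g (EuclideanSpace.single i 1))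
        + (-2 * r x ^ (pc - 2) * (r x)⁻¹) * (x i * (H (EuclideanSpace.single i 1)) x)
        + (-2 * r x ^ (pc - 1) * ((r x)⁻¹) ^ 2) * (x i * (H x) (EuclideanSpace.single i 1))
        + (r x ^ (pc - 1) * (r x)⁻¹) * ((H (EuclideanSpace.single i 1)) (EuclideanSpace.single i 1))
        + (2 * pc * r x ^ (pc - 1) * u (iv x) - 2 * r x ^ (pc - 2) * g x) := by
    intro i _
    have hC3 := hC.clm_apply (hasFDerivAt_const (EuclideanSpace.single i 1) x)
    have hp := ((((hA.const_mul (2 * pc)).mul hB).sub ((hA2.const_mul 2).mul hC2)).mul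
        (hasFDerivAt_proj x i)).add (hA.mul hC3)
    simp only [id_eq, Pi.mul_def, Pi.sub_def, Pi.add_def] at hp
    rw [hp.fderiv]
    simp only [ContinuousLinearMap.add_apply, ContinuousLinearMap.smul_apply,
      ContinuousLinearMap.sub_apply, ContinuousLinearMap.coe_comp', Function.comp_apply,
      ContinuousLinearMap.flip_apply, ContinuousLinearMap.smulRight_apply,
      ContinuousLinearMap.coe_id', id_eq, Dphi, ContinuousLinearMap.coe_sub',
      Pi.sub_apply, ContinuousLinearMap.id_apply, innerSL_apply_apply, map_sub, map_smul,
      PiLp.proj_apply, smul_eq_mul, EuclideanSpace.inner_single_right,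
      starRingEnd_apply, star_trivial, EuclideanSpace.single_apply,
      ContinuousLinearMap.zero_apply, ContinuousLinearMap.comp_zero, map_zero, ite_true]
    ring
  rw [Finset.sum_congr rfl key]
  have hS2 : ∑ i : Fin m, x i * (H (EuclideanSpace.single i 1)) x = H x x := by
    simpa using sum_coord_apply x (H.flip x)
  have hS3 : ∑ i : Fin m, x i * (H x) (EuclideanSpace.single i 1) = H x x :=
    sum_coord_apply x (H x)
  simp only [Finset.sum_add_distrib, ← Finset.mul_sum, Finset.sum_const, Finset.card_univ,
    Fintype.card_fin, nsmul_eq_mul]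
  rw [sum_coord_sq x, sum_coord_apply x g, hS2, hS3, hlap, hm]
  have e1 : r x ^ (pc - 1) = r x ^ pc * (r x)⁻¹ := rpow_shift hR pc
  have e2 : r x ^ (pc - 1 - 1) = r x ^ pc * (r x)⁻¹ * (r x)⁻¹ := by
    rw [rpow_shift hR, e1]
  have e3 : r x ^ (pc - 2) = r x ^ pc * (r x)⁻¹ * (r x)⁻¹ := by
    rw [show pc - 2 = pc - 1 - 1 by ring, e2]
  have e4 : r x ^ (pc - 2 - 1) = r x ^ pc * (r x)⁻¹ * (r x)⁻¹ * (r x)⁻¹ := by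
    rw [rpow_shift hR, e3]
  rw [e1, e2, e3, e4]
  have hRne : r x ≠ 0 := hR.ne'
  field_simp
  ring

end KelvinAux

open KelvinAux in
/-- if `u` is harmonic on an open set `Ω ⊂ ℝ^{n+1} \ {0}`, then its
Kelvin transform `u*` is harmonic on `Ω* = {x/|x|² : x ∈ Ω}`; moreover `(u*)* = u`
away from the origin. -/
theorem stmt12 (n : ℕ) (hn : 1 ≤ n)
    (u : EuclideanSpace ℝ (Fin (n + 1)) → ℝ)
    (Ω : Set (EuclideanSpace ℝ (Fin (n + 1)))) (hΩ : IsOpen Ω)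
    (hΩ0 : (0 : EuclideanSpace ℝ (Fin (n + 1))) ∉ Ω)
    (hu : IsHarmonicOn u Ω) :
    IsHarmonicOn (kelvin n u) ((fun x => (‖x‖ ^ 2)⁻¹ • x) '' Ω) ∧
    ∀ x : EuclideanSpace ℝ (Fin (n + 1)), x ≠ 0 → kelvin n (kelvin n u) x = u x := by
  set pc : ℝ := -((n : ℝ) - 1) / 2 with hpc
  -- the image set
  set S : Set (EuclideanSpace ℝ (Fin (n + 1))) := {z : EuclideanSpace ℝ (Fin (n + 1)) | z ≠ 0 ∧ iv z ∈ Ω} with hS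
  have hiv_eq : (fun x : EuclideanSpace ℝ (Fin (n + 1)) => (‖x‖ ^ 2)⁻¹ • x) = iv := rfl
  have himage : (fun x : EuclideanSpace ℝ (Fin (n + 1)) => (‖x‖ ^ 2)⁻¹ • x) '' Ω = S := by
    rw [hiv_eq]
    ext z
    constructor
    · rintro ⟨x, hxΩ, rfl⟩
      have hx0 : x ≠ 0 := fun h => hΩ0 (h ▸ hxΩ)
      exact ⟨iv_ne_zero hx0, by rw [iv_iv hx0]; exact hxΩ⟩
    · rintro ⟨hz0, hzΩ⟩
      exact ⟨iv z, hzΩ, iv_iv hz0⟩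
  have hSopen : IsOpen S := by
    rw [isOpen_iff_mem_nhds]
    rintro z ⟨hz0, hzΩ⟩
    have hc : ContinuousAt (iv (m := n+1)) z := (hasFDerivAt_iv hz0).continuousAt
    have h1 : {w : EuclideanSpace ℝ (Fin (n + 1)) | w ≠ 0} ∈ nhds z := by
      simpa [Set.compl_singleton_eq] using isOpen_compl_singleton.mem_nhds
        (Set.mem_compl_singleton_iff.mpr hz0)
    have h2 : iv ⁻¹' Ω ∈ nhds z := hc.preimage_mem_nhds (hΩ.mem_nhds hzΩ)
    filter_upwards [h1, h2] with w hw1 hw2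
    exact ⟨hw1, hw2⟩
  -- kelvin agrees with the rpow form away from 0
  have hkelvin_eq : ∀ z : EuclideanSpace ℝ (Fin (n + 1)), z ≠ 0 → kelvin n u z = r z ^ pc * u (iv z) := by
    intro z hz
    have ht : (0:ℝ) < ‖z‖ := norm_pos_iff.mpr hz
    have h1 : r z ^ pc = ‖z‖ ^ (2 * pc) := by
      rw [r, ← Real.rpow_natCast ‖z‖ 2, ← Real.rpow_mul ht.le]
      norm_num
    have h2 : (‖z‖ ^ (n - 1))⁻¹ = ‖z‖ ^ (2 * pc) := by
      rw [← Real.rpow_natCast ‖z‖ (n - 1), ← Real.rpow_neg ht.le]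
      congr 1
      rw [Nat.cast_sub hn]
      simp [hpc]
      ring
    rw [kelvin, h2, h1]
    rfl
  constructor
  · rw [himage]
    have hm : ((n + 1 : ℕ) : ℝ) = 2 - 2 * pc := by push_cast [hpc]; ring
    constructor
    · -- ContDiffOn
      intro x hx
      apply ContDiffAt.contDiffWithinAt
      obtain ⟨hx0, hxΩ⟩ := hx
      have hnorm : ContDiffAt ℝ 2 (fun z : EuclideanSpace ℝ (Fin (n + 1)) => ‖z‖) x := contDiffAt_norm ℝ hx0
      have h1 : ContDiffAt ℝ 2 (fun z : EuclideanSpace ℝ (Fin (n + 1)) => (‖z‖ ^ (n - 1))⁻¹) x :=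
        (hnorm.pow (n - 1)).inv (pow_ne_zero _ (norm_ne_zero_iff.mpr hx0))
      have h2 : ContDiffAt ℝ 2 (fun z : EuclideanSpace ℝ (Fin (n + 1)) => (‖z‖ ^ 2)⁻¹ • z) x :=
        (((contDiffAt_id.norm_sq ℝ).inv (r_pos hx0).ne').smul contDiffAt_id)
      have h3 : ContDiffAt ℝ 2 u (iv x) := hu.1.contDiffAt (hΩ.mem_nhds hxΩ)
      exact h1.mul (h3.comp x h2)
    · -- Laplacian
      rintro x ⟨hx0, hxΩ⟩
      have hcd : ContDiffAt ℝ 2 u (iv x) := hu.1.contDiffAt (hΩ.mem_nhds hxΩ)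
      have hdu : DifferentiableAt ℝ u (iv x) := hcd.differentiableAt (by norm_num)
      have hdH : DifferentiableAt ℝ (fderiv ℝ u) (iv x) :=
        (hcd.fderiv_right (m := 1) (by norm_num)).differentiableAt (by norm_num)
      have hHy : HasFDerivAt (fderiv ℝ u) (fderiv ℝ (fderiv ℝ u) (iv x)) (iv x) :=
        hdH.hasFDerivAt
      -- translate the Laplacian hypothesis
      have hlap : ∑ i : Fin (n+1), fderiv ℝ (fderiv ℝ u) (iv x) (EuclideanSpace.single i 1)
          (EuclideanSpace.single i 1) = 0 := by
        have h := hu.2 (iv x) hxΩ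
        rw [← h]
        apply Finset.sum_congr rfl
        intro i _
        rw [(hHy.clm_apply (hasFDerivAt_const (EuclideanSpace.single i 1) (iv x))).fderiv]
        simp
      -- the eventual equality of the first derivatives
      have hev : ∀ i : Fin (n+1),
          (fun z : EuclideanSpace ℝ (Fin (n + 1)) => fderiv ℝ (kelvin n u) z (EuclideanSpace.single i 1)) =ᶠ[nhds x]
          (fun z : EuclideanSpace ℝ (Fin (n + 1)) => (2 * pc * r z ^ (pc - 1) * u (iv z)
              - 2 * r z ^ (pc - 2) * fderiv ℝ u (iv z) z) * z i
            + r z ^ (pc - 1) * fderiv ℝ u (iv z) (EuclideanSpace.single i 1)) := by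
        intro i
        filter_upwards [hSopen.mem_nhds ⟨hx0, hxΩ⟩] with z hz
        obtain ⟨hz0, hzΩ⟩ := hz
        have hdz : DifferentiableAt ℝ u (iv z) :=
          (hu.1.contDiffAt (hΩ.mem_nhds hzΩ)).differentiableAt (by norm_num)
        have hfe : kelvin n u =ᶠ[nhds z] (fun w : EuclideanSpace ℝ (Fin (n + 1)) => r w ^ pc * u (iv w)) := by
          filter_upwards [isOpen_compl_singleton.mem_nhds
            (Set.mem_compl_singleton_iff.mpr hz0)] with w hw
          exact hkelvin_eq w hw
        rw [hfe.fderiv_eq]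
        exact fderiv_G_apply hz0 hdz i
      have hsum := sum_snd_deriv (pc := pc) hx0 hdu hdH (by exact_mod_cast hm) hlap
      rw [← hsum]
      apply Finset.sum_congr rfl
      intro i _
      rw [(hev i).fderiv_eq]
  · -- involution
    intro x hx
    have ht : (0:ℝ) < ‖x‖ := norm_pos_iff.mpr hx
    have htne : (‖x‖ : ℝ) ^ (n - 1) ≠ 0 := pow_ne_zero _ ht.ne'
    simp only [kelvin]
    have h2 : ((‖(iv x : EuclideanSpace ℝ (Fin (n + 1)))‖ ^ 2)⁻¹ • (iv x) : EuclideanSpace ℝ (Fin (n + 1))) = x := iv_iv hx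
    rw [show ((‖x‖ ^ 2)⁻¹ • x : EuclideanSpace ℝ (Fin (n + 1))) = iv x from rfl, h2, norm_iv, inv_pow]
    field_simp
end
end
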